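/- arXiv:2301.09119 — 2 statements merged into one kernel-verified Lean document; each statement's English description precedes it below -/
import Mathlib

section
/- Let n ≥ 2, A > 0, and let μ_0 ≤ μ_1 ≤ … ≤ μ_{n-1} be positive real numbers with ∏_{i=0}^{n-1} μ_i ≤ A. Then there exists a constant C depending only on n and A such that −∑_{1≤i<j≤n-1} (μ_i − μ_j)² + 2 μ_0 · ∑_{i=1}^{n-1} μ_i ≤ C. (One may take the case analysis μ_1 < μ_{n-1}/2 versus μ_1 ≥ μ_{n-1}/2.) -/
open Finset

theorem stmt_2 (n : ℕ) (hn : 2 ≤ n) (A : ℝ) (hA : 0 < A) :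
    ∃ C : ℝ, ∀ μ : Fin n → ℝ, (∀ i, 0 < μ i) → Monotone μ → (∏ i, μ i) ≤ A →
      - ∑ p ∈ Finset.univ.filter
            (fun p : Fin n × Fin n => (p.1 : ℕ) ≠ 0 ∧ p.1 < p.2), (μ p.1 - μ p.2) ^ 2
        + 2 * μ ⟨0, by omega⟩ * ∑ i ∈ Finset.univ.filter (fun i : Fin n => (i : ℕ) ≠ 0), μ i
      ≤ C := by
  classical
  set B : ℝ := max 1 A with hBdef
  set B2 : ℝ := max 1 (2 ^ (n-1) * A) with hB2def
  refine ⟨2 * n * B2 + 4 * n^2 * B^2, ?_⟩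
  intro μ hpos hmono hprod
  set z : Fin n := ⟨0, by omega⟩ with hz
  set o : Fin n := ⟨1, by omega⟩ with ho
  set L : Fin n := ⟨n-1, by omega⟩ with hL
  have hB1 : (1:ℝ) ≤ B := le_max_left _ _
  have hB21 : (1:ℝ) ≤ B2 := le_max_left _ _
  have hnR : (1:ℝ) ≤ (n:ℝ) := by exact_mod_cast Nat.one_le_of_lt hn
  set M := μ L with hM
  have hM0 : 0 < M := hpos L
  have hmu0 : 0 < μ z := hpos z
  have hML : ∀ i, μ i ≤ M := by
    intro i
    have hi := i.isLt
    exact hmono (by simp only [Fin.le_def, hL]; omega)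
  -- T bound
  have hT0 : 0 ≤ ∑ i ∈ Finset.univ.filter (fun i : Fin n => (i : ℕ) ≠ 0), μ i :=
    Finset.sum_nonneg fun i _ => (hpos i).le
  have hT : ∑ i ∈ Finset.univ.filter (fun i : Fin n => (i : ℕ) ≠ 0), μ i ≤ n * M := by
    calc ∑ i ∈ Finset.univ.filter (fun i : Fin n => (i : ℕ) ≠ 0), μ i
        ≤ ∑ _i ∈ Finset.univ.filter (fun i : Fin n => (i : ℕ) ≠ 0), M :=
          Finset.sum_le_sum fun i _ => hML i
      _ = ((Finset.univ.filter (fun i : Fin n => (i : ℕ) ≠ 0)).card : ℝ) * M := by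
          rw [Finset.sum_const, nsmul_eq_mul]
      _ ≤ n * M := by
          have hc : ((Finset.univ.filter (fun i : Fin n => (i : ℕ) ≠ 0)).card : ℝ) ≤ (n:ℝ) := by
            exact_mod_cast (Finset.card_filter_le _ _).trans (by simp)
          exact mul_le_mul_of_nonneg_right hc hM0.le
  have hS0 : 0 ≤ ∑ p ∈ Finset.univ.filter
      (fun p : Fin n × Fin n => (p.1 : ℕ) ≠ 0 ∧ p.1 < p.2), (μ p.1 - μ p.2) ^ 2 :=
    Finset.sum_nonneg fun p _ => sq_nonneg _
  -- μ z ≤ B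
  have hpowA : μ z ^ n ≤ A := by
    calc μ z ^ n = ∏ _i : Fin n, μ z := by simp
      _ ≤ ∏ i, μ i := Finset.prod_le_prod (fun i _ => hmu0.le)
          (fun i _ => hmono (by simp [Fin.le_def, hz]))
      _ ≤ A := hprod
  have hmu0B : μ z ≤ B := by
    rcases le_or_gt (μ z) 1 with h | h
    · exact h.trans hB1
    · have h1 : μ z ≤ μ z ^ n := le_self_pow₀ h.le (by omega)
      exact (h1.trans hpowA).trans (le_max_right _ _)
  rcases lt_or_ge (μ o) (M / 2) with hcase | hcase
  · -- case μ₁ < M/2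
    have hn3 : 3 ≤ n := by
      by_contra h
      have hn2 : n = 2 := by omega
      have hoL : o = L := by apply Fin.ext; simp [ho, hL, hn2]
      rw [hoL] at hcase
      linarith
    have hmem : (o, L) ∈ Finset.univ.filter
        (fun p : Fin n × Fin n => (p.1 : ℕ) ≠ 0 ∧ p.1 < p.2) := by
      rw [Finset.mem_filter]
      refine ⟨Finset.mem_univ _, ?_, ?_⟩
      · rw [ho]; simp
      · rw [ho, hL, Fin.lt_def]; simp; omega
    have hS : (μ o - M)^2 ≤ ∑ p ∈ Finset.univ.filter
        (fun p : Fin n × Fin n => (p.1 : ℕ) ≠ 0 ∧ p.1 < p.2), (μ p.1 - μ p.2) ^ 2 :=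
      Finset.single_le_sum (f := fun p : Fin n × Fin n => (μ p.1 - μ p.2)^2)
        (fun p _ => sq_nonneg _) hmem
    have hsq : M^2/4 ≤ (μ o - M)^2 := by nlinarith [hpos o]
    have hTB : μ z * (∑ i ∈ Finset.univ.filter (fun i : Fin n => (i : ℕ) ≠ 0), μ i)
        ≤ B * (n * M) :=
      mul_le_mul hmu0B hT hT0 (by linarith)
    nlinarith [sq_nonneg (M/2 - 2*(n:ℝ)*B), hB21, hnR, hB1]
  · -- case μ₁ ≥ M/2
    have hprodlow : μ z * (M/2)^(n-1) ≤ A := by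
      have h1 : (M/2)^(n-1) ≤ ∏ i ∈ Finset.univ.erase z, μ i := by
        calc (M/2)^(n-1) = ∏ _i ∈ Finset.univ.erase z, (M/2) := by
              rw [Finset.prod_const, Finset.card_erase_of_mem (Finset.mem_univ z),
                Finset.card_univ, Fintype.card_fin]
          _ ≤ ∏ i ∈ Finset.univ.erase z, μ i := by
              apply Finset.prod_le_prod (fun i _ => by positivity)
              intro i hi
              have hine : i ≠ z := Finset.ne_of_mem_erase hi
              have hiv : (i : ℕ) ≠ 0 := by
                intro h
                exact hine (Fin.ext (by simp [hz, h]))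
              have hoi : o ≤ i := by simp only [Fin.le_def, ho]; omega
              exact hcase.trans (hmono hoi)
      have h2 : μ z * (M/2)^(n-1) ≤ μ z * ∏ i ∈ Finset.univ.erase z, μ i :=
        mul_le_mul_of_nonneg_left h1 hmu0.le
      rw [Finset.mul_prod_erase Finset.univ μ (Finset.mem_univ z)] at h2
      exact h2.trans hprod
    have hMpow : μ z * M^(n-1) ≤ 2^(n-1) * A := by
      have : (M/2)^(n-1) = M^(n-1) / 2^(n-1) := div_pow M 2 (n-1)
      rw [this] at hprodlow
      have h2p : (0:ℝ) < 2^(n-1) := by positivity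
      calc μ z * M^(n-1) = (μ z * (M^(n-1) / 2^(n-1))) * 2^(n-1) := by field_simp
        _ ≤ A * 2^(n-1) := mul_le_mul_of_nonneg_right hprodlow h2p.le
        _ = 2^(n-1) * A := by ring
    have hzM : μ z ≤ M := hML z
    -- key: (μ z * M)^n ≤ (2^(n-1)*A)^2
    have hp2 : μ z ^ (n-2) ≤ M ^ (n-2) := pow_le_pow_left₀ hmu0.le hzM _
    have e1 : μ z ^ (n-1) = μ z ^ (n-2) * μ z := by
      rw [← pow_succ]; congr 1; omega
    have e2 : M ^ (n-1) = M ^ (n-2) * M := by rw [← pow_succ]; congr 1; omega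
    have h2 : μ z ^ (n-1) * M ≤ μ z * M^(n-1) := by
      rw [e1, e2]
      nlinarith [mul_le_mul_of_nonneg_right (mul_le_mul_of_nonneg_right hp2 hmu0.le) hM0.le]
    have e3 : (μ z * M)^n = (μ z * M^(n-1)) * (μ z ^(n-1) * M) := by
      have eA : μ z ^ n = μ z ^ (n-1) * μ z := by rw [← pow_succ]; congr 1; omega
      have eB : M ^ n = M ^ (n-1) * M := by rw [← pow_succ]; congr 1; omega
      rw [mul_pow, eA, eB]; ring
    have hposzM : (0:ℝ) < μ z * M^(n-1) := by positivity
    have key : (μ z * M)^n ≤ (2^(n-1) * A)^2 := by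
      rw [e3]
      calc (μ z * M^(n-1)) * (μ z ^(n-1) * M) ≤ (μ z * M^(n-1)) * (μ z * M^(n-1)) :=
            mul_le_mul_of_nonneg_left h2 hposzM.le
        _ = (μ z * M^(n-1))^2 := by ring
        _ ≤ (2^(n-1) * A)^2 := by
            apply pow_le_pow_left₀ hposzM.le hMpow
    have hzMB2 : μ z * M ≤ B2 := by
      rcases le_or_gt (μ z * M) 1 with h | h
      · exact h.trans hB21
      · have hx2 : (μ z * M)^2 ≤ (μ z * M)^n := pow_le_pow_right₀ h.le hn
        have hle : (μ z * M)^2 ≤ (2^(n-1) * A)^2 := hx2.trans key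
        have h2A : (0:ℝ) < 2^(n-1) * A := by positivity
        have : μ z * M ≤ 2^(n-1) * A :=
          (pow_le_pow_iff_left₀ (mul_nonneg hmu0.le hM0.le) h2A.le two_ne_zero).1 hle
        exact this.trans (le_max_right _ _)
    have hTB : μ z * (∑ i ∈ Finset.univ.filter (fun i : Fin n => (i : ℕ) ≠ 0), μ i)
        ≤ μ z * (n * M) := mul_le_mul_of_nonneg_left hT hmu0.le
    have hfin : μ z * ((n:ℝ) * M) ≤ (n:ℝ) * B2 := by
      have : (n:ℝ) * (μ z * M) ≤ (n:ℝ) * B2 :=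
        mul_le_mul_of_nonneg_left hzMB2 (by linarith)
      linarith [this]
    have h4 : (0:ℝ) ≤ 4 * (n:ℝ)^2 * B^2 := by positivity
    linarith
end

section
/- Combining the previous two facts: for n ≥ 2 and A > 0 there exists C = C(n, A) such that for all positive reals μ_0, …, μ_{n-1} with ∏ μ_i ≤ A, one has 2(n-1)·∑_{i<j} μ_i μ_j + (2-n)·(∑_i μ_i)² ≤ C. -/
open Finset

private lemma aux_pairs (n : ℕ) (μ : Fin n → ℝ) :
    2 * ∑ p ∈ Finset.univ.filter (fun p : Fin n × Fin n => p.1 < p.2), μ p.1 * μ p.2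
      = (∑ i, μ i)^2 - ∑ i, (μ i)^2 := by
  have h1 : (∑ i, μ i)^2 = ∑ p ∈ (univ ×ˢ univ : Finset (Fin n × Fin n)), μ p.1 * μ p.2 := by
    rw [sq, Finset.sum_mul_sum, Finset.sum_product]
  have h2 : (univ ×ˢ univ : Finset (Fin n × Fin n)) = univ := Finset.univ_product_univ
  have h3 := Finset.sum_filter_add_sum_filter_not (univ : Finset (Fin n × Fin n))
    (fun p => p.1 < p.2) (fun p => μ p.1 * μ p.2)
  have h4 := Finset.sum_filter_add_sum_filter_not
    ((univ : Finset (Fin n × Fin n)).filter (fun p => ¬ p.1 < p.2))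
    (fun p => p.2 < p.1) (fun p => μ p.1 * μ p.2)
  rw [Finset.filter_filter, Finset.filter_filter] at h4
  have h5 : ((univ : Finset (Fin n × Fin n)).filter (fun p => ¬ p.1 < p.2 ∧ ¬ p.2 < p.1))
      = univ.filter (fun p => p.1 = p.2) := by
    apply Finset.filter_congr
    intro p _
    constructor
    · rintro ⟨h, h'⟩; exact le_antisymm (not_lt.1 h') (not_lt.1 h)
    · rintro h; simp [h]
  have h6 : ∑ p ∈ (univ : Finset (Fin n × Fin n)).filter (fun p => p.1 = p.2),
      μ p.1 * μ p.2 = ∑ i, (μ i)^2 := by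
    apply Finset.sum_bij' (fun (p : Fin n × Fin n) _ => p.1) (fun i _ => (i, i))
    · intro p hp; simp
    · intro p hp; simp
    · intro p hp; simp at hp; exact Prod.ext rfl hp
    · intro p hp; simp
    · intro p hp; simp at hp; rw [sq, hp]
  have h7 : ∑ p ∈ (univ : Finset (Fin n × Fin n)).filter (fun p => ¬ p.1 < p.2 ∧ p.2 < p.1),
      μ p.1 * μ p.2
      = ∑ p ∈ (univ : Finset (Fin n × Fin n)).filter (fun p => p.1 < p.2), μ p.1 * μ p.2 := by
    apply Finset.sum_bij' (fun p _ => Prod.swap p) (fun p _ => Prod.swap p)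
    · intro p hp; simp at hp ⊢; exact hp.2
    · intro p hp; simp at hp ⊢; exact ⟨le_of_lt hp, hp⟩
    · intro p _; simp
    · intro p _; simp
    · intro p _; simp [mul_comm]
  rw [h5, h6, h7] at h4
  rw [h1, h2, ← h3, ← h4]
  ring

private lemma aux_div (k X Y : ℝ) (hk : 1 ≤ k) (h : k * X ≤ 4*(k*Y)^2) : X ≤ 4*k*Y^2 := by
  nlinarith [h, sq_nonneg Y]

private lemma aux_case1 (nr m S Q B b : ℝ) (hn2 : 2 ≤ nr) (hm0 : 0 < m) (hb0 : 0 < b)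
    (hS0 : 0 ≤ S) (hQ0 : 0 ≤ Q) (hCS : S^2 ≤ (nr-1)*Q) (hSb : S ≤ (nr-1)*(2*b))
    (hmb : m*b ≤ B) (hmB : m ≤ B) (hB1 : 1 ≤ B) :
    (m+S)^2 - (nr-1)*(m^2+Q) ≤ 4*nr*B + 4*nr*nr^2*B^2 := by
  have f1 : (m + S)^2 - (nr-1) * (m^2 + Q) ≤ 2*(m*S) := by
    nlinarith [hCS, mul_nonneg (by linarith : (0:ℝ) ≤ nr-2) (sq_nonneg m)]
  have f2 : m*S ≤ m*((nr-1)*(2*b)) := mul_le_mul_of_nonneg_left hSb hm0.le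
  have f4 : 2*(nr-1)*(m*b) ≤ 2*(nr-1)*B :=
    mul_le_mul_of_nonneg_left hmb (by linarith)
  have f5 : 2*(nr-1)*B ≤ 4*nr*B := by nlinarith
  have f6 : (0:ℝ) ≤ 4*nr*nr^2*B^2 := by positivity
  nlinarith [f1, f2, f4, f5, f6]

private lemma aux_case2 (nr m B a b R P : ℝ) (hn3 : 3 ≤ nr) (hm0 : 0 < m) (hb0 : 0 < b)
    (hba : b ≤ a) (hcase : 2*b < a) (hR0 : 0 ≤ R) (hP0 : 0 ≤ P)
    (hSa : a + R ≤ (nr-1)*a) (hmB : m ≤ B) (hB1 : 1 ≤ B)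
    (hCS2 : R^2 ≤ (nr-2)*P) (hD : a - b ≤ (nr-2)*a - R) :
    (m+(a+R))^2 - (nr-1)*(m^2+(a^2+P)) ≤ 4*nr*B + 4*nr*nr^2*B^2 := by
  have ha0 : 0 < a := lt_of_lt_of_le hb0 hba
  have hab0 : (0:ℝ) ≤ a - b := by linarith
  have hD2 : (a-b)^2 ≤ ((nr-2)*a - R)^2 := by
    apply pow_le_pow_left₀ hab0 hD
  have hslack : (a-b)^2 ≤ (nr-2)*((nr-1)*(a^2+P) - (a+R)^2) := by
    nlinarith [hD2, mul_nonneg (by linarith : (0:ℝ) ≤ nr-1)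
      (by linarith : (0:ℝ) ≤ (nr-2)*P - R^2)]
  have hEk : (nr-2)*((m+(a+R))^2 - (nr-1)*(m^2+(a^2+P)))
      ≤ 2*(nr-2)*(m*(a+R)) - (a-b)^2 := by
    nlinarith [hslack, sq_nonneg ((nr-2)*m)]
  have hms : m*(a+R) ≤ B*((nr-1)*a) := by
    apply mul_le_mul hmB hSa (by linarith) (by linarith)
  have hab4 : a^2/4 ≤ (a-b)^2 := by nlinarith
  have hEk2 : (nr-2)*((m+(a+R))^2 - (nr-1)*(m^2+(a^2+P)))
      ≤ 2*(nr-2)*(B*((nr-1)*a)) - a^2/4 := by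
    have h := mul_le_mul_of_nonneg_left hms (by linarith : (0:ℝ) ≤ 2*(nr-2))
    linarith
  have hEk3 : (nr-2)*((m+(a+R))^2 - (nr-1)*(m^2+(a^2+P)))
      ≤ 4*((nr-2)*((nr-1)*B))^2 := by
    nlinarith [hEk2, sq_nonneg (a/2 - 2*(nr-2)*((nr-1)*B))]
  have hE4 : (m+(a+R))^2 - (nr-1)*(m^2+(a^2+P)) ≤ 4*(nr-2)*((nr-1)*B)^2 :=
    aux_div (nr-2) _ ((nr-1)*B) (by linarith) hEk3
  have hfin : 4*(nr-2)*((nr-1)*B)^2 ≤ 4*nr*nr^2*B^2 := by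
    have e1 : 4*(nr-2)*((nr-1)*B)^2 = 4*(nr-2)*(nr-1)^2*B^2 := by ring
    rw [e1]
    gcongr <;> linarith
  have : (0:ℝ) ≤ 4*nr*B := by positivity
  linarith

theorem stmt_3 (n : ℕ) (hn : 2 ≤ n) (A : ℝ) (hA : 0 < A) :
    ∃ C : ℝ, ∀ μ : Fin n → ℝ, (∀ i, 0 < μ i) → (∏ i, μ i) ≤ A →
      2 * ((n : ℝ) - 1) *
          ∑ p ∈ Finset.univ.filter (fun p : Fin n × Fin n => p.1 < p.2), μ p.1 * μ p.2
        + (2 - (n : ℝ)) * (∑ i, μ i) ^ 2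
      ≤ C := by
  set B : ℝ := max A 1 with hBdef
  have hB1 : 1 ≤ B := le_max_right _ _
  have hAB : A ≤ B := le_max_left _ _
  have hB0 : 0 < B := lt_of_lt_of_le one_pos hB1
  have hn2 : (2:ℝ) ≤ (n:ℝ) := by exact_mod_cast hn
  have hn1 : (1:ℝ) ≤ (n:ℝ) - 1 := by linarith
  refine ⟨4*(n:ℝ)*B + 4*(n:ℝ)*(n:ℝ)^2*B^2, fun μ hpos hprod => ?_⟩
  have hne : (univ : Finset (Fin n)).Nonempty := ⟨⟨0, by omega⟩, mem_univ _⟩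
  obtain ⟨i0, -, hmin⟩ := Finset.exists_min_image univ μ hne
  set m : ℝ := μ i0 with hmdef
  have hm0 : 0 < m := hpos i0
  set r : Finset (Fin n) := univ.erase i0 with hrdef
  have hrcard : r.card = n - 1 := by
    rw [hrdef, Finset.card_erase_of_mem (mem_univ _), Finset.card_univ, Fintype.card_fin]
  have hrcardR : (r.card : ℝ) = (n:ℝ) - 1 := by
    rw [hrcard, Nat.cast_sub (by omega)]; norm_num
  have hrne : r.Nonempty := Finset.card_pos.1 (by omega)
  obtain ⟨ia, hiar, hamax⟩ := Finset.exists_max_image r μ hrne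
  obtain ⟨ib, hibr, hbmin⟩ := Finset.exists_min_image r μ hrne
  set a : ℝ := μ ia with hadef
  set b : ℝ := μ ib with hbdef2
  have hb0 : 0 < b := hpos ib
  have hba : b ≤ a := hamax ib hibr
  have ha0 : 0 < a := lt_of_lt_of_le hb0 hba
  set S' : ℝ := ∑ j ∈ r, μ j with hS'def
  set Q' : ℝ := ∑ j ∈ r, (μ j)^2 with hQ'def
  have hS'0 : 0 ≤ S' := Finset.sum_nonneg fun j _ => (hpos j).le
  have hQ'0 : 0 ≤ Q' := Finset.sum_nonneg fun j _ => sq_nonneg _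
  have hsum : ∑ i, μ i = m + S' := (Finset.add_sum_erase _ μ (mem_univ i0)).symm
  have hsq : ∑ i, (μ i)^2 = m^2 + Q' :=
    (Finset.add_sum_erase _ (fun j => (μ j)^2) (mem_univ i0)).symm
  -- m ≤ B
  have hmB : m ≤ B := by
    rcases le_or_gt m 1 with h | h
    · exact h.trans hB1
    · have h1 : m ≤ m ^ n := le_self_pow₀ h.le (by omega)
      have h2 : m ^ n ≤ ∏ i, μ i := by
        calc m ^ n = ∏ _i : Fin n, m := by
              rw [Finset.prod_const, Finset.card_univ, Fintype.card_fin]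
          _ ≤ ∏ i, μ i :=
              Finset.prod_le_prod (fun i _ => hm0.le) (fun i _ => hmin i (mem_univ _))
      linarith
  -- m * b ≤ B
  have hmb : m * b ≤ B := by
    rcases le_or_gt b 1 with h | h
    · nlinarith
    · have h1 : b ≤ b ^ (n-1) := le_self_pow₀ h.le (by omega)
      have h2 : m * b ^ (n-1) ≤ ∏ i, μ i := by
        have e1 : b ^ (n-1) = ∏ _j ∈ r, b := by rw [Finset.prod_const, hrcard]
        rw [e1, ← Finset.mul_prod_erase _ μ (mem_univ i0), ← hrdef]
        exact mul_le_mul_of_nonneg_left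
          (Finset.prod_le_prod (fun j _ => hb0.le) (fun j hj => hbmin j hj)) hm0.le
      nlinarith
  have hS'a : S' ≤ ((n:ℝ) - 1) * a := by
    have := Finset.sum_le_card_nsmul r μ a (fun j hj => hamax j hj)
    rw [nsmul_eq_mul, hrcardR] at this
    exact this
  -- reduce goal using the pair-sum identity
  have key : 2 * ((n : ℝ) - 1) *
          ∑ p ∈ Finset.univ.filter (fun p : Fin n × Fin n => p.1 < p.2), μ p.1 * μ p.2
        + (2 - (n : ℝ)) * (∑ i, μ i) ^ 2
      = (m + S')^2 - ((n:ℝ)-1) * (m^2 + Q') := by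
    have hid' := aux_pairs n μ
    rw [hsum, hsq] at hid'
    rw [hsum]
    linear_combination ((n:ℝ)-1) * hid'
  rw [key]
  have hCS : S'^2 ≤ ((n:ℝ)-1) * Q' := by
    have := sq_sum_le_card_mul_sum_sq (s := r) (f := μ)
    rw [hrcardR] at this
    exact this
  rcases le_or_gt a (2*b) with hcase | hcase
  · -- comparable case
    have hSb : S' ≤ ((n:ℝ)-1)*(2*b) :=
      hS'a.trans (mul_le_mul_of_nonneg_left hcase (by linarith))
    exact aux_case1 (n:ℝ) m S' Q' B b hn2 hm0 hb0 hS'0 hQ'0 hCS hSb hmb hmB hB1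
  · -- spread case
    have hblta : b < a := by linarith
    have hiab : ia ≠ ib := by
      intro h
      rw [hadef, hbdef2, h] at hblta
      exact lt_irrefl _ hblta
    have hrcard2 : 2 ≤ r.card := Finset.one_lt_card.2 ⟨ia, hiar, ib, hibr, hiab⟩
    have hn3 : 3 ≤ n := by omega
    have hn3R : (3:ℝ) ≤ (n:ℝ) := by exact_mod_cast hn3
    set r' : Finset (Fin n) := r.erase ia with hr'def
    have hr'card : r'.card = n - 2 := by
      rw [hr'def, Finset.card_erase_of_mem hiar, hrcard]; omega
    have hr'cardR : (r'.card : ℝ) = (n:ℝ) - 2 := by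
      rw [hr'card, Nat.cast_sub (by omega)]; norm_num
    set R : ℝ := ∑ j ∈ r', μ j with hRdef
    set P : ℝ := ∑ j ∈ r', (μ j)^2 with hPdef
    have hR0 : 0 ≤ R := Finset.sum_nonneg fun j _ => (hpos j).le
    have hP0 : 0 ≤ P := Finset.sum_nonneg fun j _ => sq_nonneg _
    have hS'dec : S' = a + R := by
      rw [hS'def, hRdef, hadef]; exact (Finset.add_sum_erase _ μ hiar).symm
    have hQ'dec : Q' = a^2 + P := by
      rw [hQ'def, hPdef, hadef]; exact (Finset.add_sum_erase _ (fun j => (μ j)^2) hiar).symm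
    have hCS2 : R^2 ≤ ((n:ℝ)-2) * P := by
      have := sq_sum_le_card_mul_sum_sq (s := r') (f := μ)
      rw [hr'cardR] at this
      exact this
    have hibr' : ib ∈ r' := Finset.mem_erase.2 ⟨hiab.symm, hibr⟩
    have hD : a - b ≤ ((n:ℝ)-2)*a - R := by
      rw [hRdef, hadef, hbdef2]
      have h1 : μ ia - μ ib ≤ ∑ j ∈ r', (μ ia - μ j) :=
        Finset.single_le_sum (f := fun j => μ ia - μ j)
          (fun j hj => sub_nonneg.2 (hamax j (Finset.mem_of_mem_erase hj))) hibr'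
      have h2 : ∑ j ∈ r', (μ ia - μ j) = ((n:ℝ)-2)*(μ ia) - ∑ j ∈ r', μ j := by
        rw [Finset.sum_sub_distrib, Finset.sum_const, nsmul_eq_mul, hr'cardR]
      linarith
    have hSa2 : a + R ≤ ((n:ℝ)-1)*a := by rw [← hS'dec]; exact hS'a
    rw [hS'dec, hQ'dec]
    exact aux_case2 (n:ℝ) m B a b R P hn3R hm0 hb0 hba hcase hR0 hP0 hSa2 hmB hB1 hCS2 hD
end
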